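/- arXiv:1803.09389 — 8 statements merged into one kernel-verified Lean document; each statement's English description precedes it below -/
import Mathlib

section
/- Let A be an ℕ-graded commutative ring and let a, b ∈ A_1 be homogeneous elements of degree 1. Then there is a ring isomorphism between the localization of A[a⁻¹]_0 at the element b/a and the degree-0 part A[(ab)⁻¹]_0 of the localization of A at ab. -/
/-!
If `f, g` are homogeneous of the same degree, then `A_{(fg)}` is `A_{(f)}` with the degree-zero
fraction `g/f` inverted: `awayMap` sends `g/f` to `g²/(fg)`, whose inverse is `f²/(fg)`, and a
fraction `r/(fg)ⁿ` of `A_{(fg)}` is the image of `r/f²ⁿ` divided by the image of `(g/f)ⁿ`.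
-/

namespace HomogeneousLocalization

variable {ι A σ : Type*} [CommRing A] [SetLike σ A] [AddSubgroupClass σ A]
  [AddCommMonoid ι] [DecidableEq ι] {𝒜 : ι → σ} [GradedRing 𝒜]
  {i : ι} {f g : A} (hf : f ∈ 𝒜 i) (hg : g ∈ 𝒜 i)

theorem Away.isLocalization_mul_of_mem_same_degree :
    letI := (awayMap 𝒜 (f := f) hg rfl).toAlgebra
    IsLocalization.Away (mk ⟨i, ⟨g, hg⟩, ⟨f, hf⟩, Submonoid.mem_powers f⟩ : Away 𝒜 f)
      (Away 𝒜 (f * g)) := by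
  let := (awayMap 𝒜 (f := f) hg rfl).toAlgebra
  have hfg : f * g ∈ 𝒜 (i + i) := SetLike.mul_mem_graded hf hg
  have hdiv : (mk ⟨i, ⟨g, hg⟩, ⟨f, hf⟩, Submonoid.mem_powers f⟩ : Away 𝒜 f) =
      Away.mk 𝒜 hf 1 g (by simpa using hg) := by
    ext; simp
  constructor; constructor
  · rintro ⟨r, n, rfl⟩
    rw [map_pow, RingHom.algebraMap_toAlgebra]
    refine (isUnit_iff_exists_inv.mpr ⟨Away.mk 𝒜 hfg 1 (f * f) ?_, ?_⟩).pow _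
    · simpa using SetLike.mul_mem_graded hf hf
    ext
    simp only [hdiv, val_mul, val_one, awayMap_mk, Away.val_mk, Localization.mk_mul]
    rw [← Localization.mk_one, Localization.mk_eq_mk_iff, Localization.r_iff_exists]
    exact ⟨1, by simp; ring⟩
  · intro z
    obtain ⟨n, r, hr, rfl⟩ := Away.mk_surjective 𝒜 hfg z
    refine ⟨⟨Away.mk 𝒜 hf (2 * n) r ?_, ⟨_, ⟨n, rfl⟩⟩⟩, ?_⟩
    · convert hr using 2; rw [mul_comm, mul_nsmul, two_nsmul, smul_add]
    ext
    simp only [hdiv, RingHom.algebraMap_toAlgebra, map_pow, awayMap_mk, val_mul, Away.val_mk,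
      val_pow, Localization.mk_pow, Localization.mk_mul]
    rw [Localization.mk_eq_mk_iff, Localization.r_iff_exists]
    exact ⟨1, by simp; ring⟩
  · intro x y e
    obtain ⟨n, x, hx, rfl⟩ := Away.mk_surjective 𝒜 hf x
    obtain ⟨m, y, hy, rfl⟩ := Away.mk_surjective 𝒜 hf y
    replace e := congr_arg val e
    simp only [RingHom.algebraMap_toAlgebra, awayMap_mk, Away.val_mk,
      Localization.mk_eq_mk_iff, Localization.r_iff_exists] at e
    obtain ⟨⟨_, k, rfl⟩, hc⟩ := e
    refine ⟨⟨_, k + m + n, rfl⟩, ?_⟩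
    ext
    simp only [hdiv, val_mul, val_pow, Away.val_mk, Localization.mk_pow,
      Localization.mk_eq_mk_iff, Localization.r_iff_exists, Submonoid.coe_mul, Localization.mk_mul,
      SubmonoidClass.coe_pow, Subtype.exists, exists_prop]
    refine ⟨_, ⟨k, rfl⟩, ?_⟩
    linear_combination f ^ (k + m + n) * hc

end HomogeneousLocalization

open HomogeneousLocalization in
theorem stmt1_general {A : Type*} [CommRing A] (𝒜 : ℤ → Submodule ℤ A) [GradedAlgebra 𝒜]
    (a b : A) (ha : a ∈ 𝒜 1) (hb : b ∈ 𝒜 1) :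
    Nonempty
      (Localization.Away
          (HomogeneousLocalization.mk ⟨1, ⟨b, hb⟩, ⟨a, ha⟩, Submonoid.mem_powers a⟩ :
            HomogeneousLocalization.Away 𝒜 a) ≃+*
        HomogeneousLocalization.Away 𝒜 (a * b)) := by
  let := (awayMap 𝒜 (f := a) hb rfl).toAlgebra
  have := Away.isLocalization_mul_of_mem_same_degree ha hb
  exact ⟨(Localization.algEquiv _ _).toRingEquiv⟩

/-- for an ℕ-graded commutative ring `A` (ℤ-graded with vanishing negative part)
and degree-one elements `a, b ∈ A₁`, the localization of the degree-zero ring `A[a⁻¹]₀` at the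
degree-zero element `b/a` is ring-isomorphic to the degree-zero part `A[(ab)⁻¹]₀`. -/
theorem stmt1 {A : Type*} [CommRing A] (𝒜 : ℤ → Submodule ℤ A) [GradedAlgebra 𝒜]
    (hA : ∀ n : ℤ, n < 0 → 𝒜 n = ⊥) (a b : A) (ha : a ∈ 𝒜 1) (hb : b ∈ 𝒜 1) :
    Nonempty
      (Localization.Away
          (HomogeneousLocalization.mk ⟨1, ⟨b, hb⟩, ⟨a, ha⟩, Submonoid.mem_powers a⟩ :
            HomogeneousLocalization.Away 𝒜 a) ≃+*
        HomogeneousLocalization.Away 𝒜 (a * b)) :=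
  stmt1_general 𝒜 a b ha hb
end

section
/- Let A be an ℕ-graded commutative ring, M and N two ℤ-graded A-modules, and a ∈ A_1 a degree-1 homogeneous element. Then there is a natural isomorphism M[a⁻¹]_0 ⊗_{A[a⁻¹]_0} N[a⁻¹]_0 ≅ ((M ⊗_A N)[a⁻¹])_0 of A[a⁻¹]_0-modules. -/
/-!
The image `u` of `a` in `A[a⁻¹]` is a unit, so `m / aⁱ := u⁻ⁱ • m` makes sense for every `i ∈ ℤ`,
and `m ∈ Mᵢ ↦ m / aⁱ` extends additively to a normalization `M → M[a⁻¹]₀`. It turns multiplication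
by a homogeneous `c ∈ Aᵢ` into multiplication by `c / aⁱ ∈ A[a⁻¹]₀`; in particular it is invariant
under multiplication by `a`. Hence `m ⊗ n ↦ norm m ⊗ norm n` is balanced over `A`, and
`t / aᵏ ↦ norm t` is a well defined `A[a⁻¹]₀`-linear map `(M ⊗_A N)[a⁻¹] → M[a⁻¹]₀ ⊗ N[a⁻¹]₀`.
Checking on the generators `m / aⁿ` of the degree-zero parts, it is inverse to the map induced by
`M[a⁻¹] ⊗_A N[a⁻¹] ≅ (M ⊗_A N)[a⁻¹]`.
-/

section

variable {A : Type*} [CommRing A]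

/-- The degree-zero part of the graded localization `M[a⁻¹]` of a ℤ-graded module `M`
(`a` of degree 1), as a submodule over the degree-zero ring `A[a⁻¹]₀`:
it is spanned by fractions `m / aⁿ` with `m` homogeneous of degree `n`. -/
noncomputable def modDegZero (𝒜 : ℤ → Submodule ℤ A) [GradedAlgebra 𝒜] (a : A)
    (M : Type*) [AddCommGroup M] [Module A M] (ℳ : ℤ → AddSubgroup M) :
    @Submodule (HomogeneousLocalization.Away 𝒜 a) (LocalizedModule (Submonoid.powers a) M) _ _
      (Module.compHom _
        (algebraMap (HomogeneousLocalization.Away 𝒜 a)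
          (Localization (Submonoid.powers a)))) :=
  letI := Module.compHom (LocalizedModule (Submonoid.powers a) M)
    (algebraMap (HomogeneousLocalization.Away 𝒜 a) (Localization (Submonoid.powers a)))
  Submodule.span (HomogeneousLocalization.Away 𝒜 a)
    {y | ∃ (n : ℕ) (m : M), m ∈ ℳ (n : ℤ) ∧ (a ^ n : A) • y = LocalizedModule.mk m 1}

/-- The degree-`n` component of the graded tensor product of two ℤ-graded modules. -/
noncomputable def tensorGrade {M N : Type*} [AddCommGroup M] [Module A M] [AddCommGroup N] [Module A N]
    (ℳ : ℤ → AddSubgroup M) (𝒩 : ℤ → AddSubgroup N) (n : ℤ) :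
    AddSubgroup (TensorProduct A M N) :=
  AddSubgroup.closure
    {t | ∃ (i j : ℤ) (m : M) (x : N), i + j = n ∧ m ∈ ℳ i ∧ x ∈ 𝒩 j ∧ t = m ⊗ₜ[A] x}

end

open LocalizedModule TensorProduct

section LocalizedPowers

variable {A : Type*} [CommRing A]

noncomputable abbrev awayUnit (a : A) : (Localization.Away a)ˣ :=
  (IsLocalization.Away.algebraMap_isUnit a).unit

theorem awayUnit_zpow_natCast (a : A) (n : ℕ) :
    ((awayUnit a ^ (n : ℤ) : (Localization.Away a)ˣ) : Localization.Away a) =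
      algebraMap A _ (a ^ n) := by
  simp [awayUnit]

theorem mk_pow_eq_awayUnit_zpow_mul (a c : A) (n : ℕ) :
    Localization.mk c ⟨a ^ n, by use n⟩ =
      ((awayUnit a ^ (-n : ℤ) : (Localization.Away a)ˣ) : Localization.Away a) *
        algebraMap A _ c := by
  rw [Localization.mk_eq_mk', IsLocalization.mk'_eq_iff_eq_mul, mul_right_comm,
    ← awayUnit_zpow_natCast, ← Units.val_mul, ← zpow_add, neg_add_cancel, zpow_zero,
    Units.val_one, one_mul]

variable {M : Type*} [AddCommGroup M] [Module A M]

noncomputable def divZPow (a : A) (i : ℤ) : M →ₗ[A] LocalizedModule (Submonoid.powers a) M :=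
  ((awayUnit a ^ (-i) : (Localization.Away a)ˣ) : Localization.Away a) •
    mkLinearMap (Submonoid.powers a) M

theorem divZPow_apply (a : A) (i : ℤ) (m : M) :
    divZPow a i m =
      ((awayUnit a ^ (-i) : (Localization.Away a)ˣ) : Localization.Away a) • mk m 1 :=
  rfl

theorem divZPow_natCast_eq_mk (a : A) (n : ℕ) (m : M) : divZPow a n m = mk m ⟨a ^ n, by use n⟩ := by
  have h := mk_pow_eq_awayUnit_zpow_mul a 1 n
  rw [map_one, mul_one] at h
  rw [divZPow_apply, ← h, mk_smul_mk, one_smul, mul_one]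

theorem pow_smul_divZPow (a : A) (n : ℕ) (m : M) : (a ^ n : A) • divZPow a n m = mk m 1 := by
  rw [divZPow_apply, ← algebraMap_smul (Localization.Away a), smul_smul, ← awayUnit_zpow_natCast,
    ← Units.val_mul, ← zpow_add, add_neg_cancel, zpow_zero, Units.val_one, one_smul]

theorem eq_divZPow_of_pow_smul_eq {a : A} {n : ℕ} {m : M}
    {x : LocalizedModule (Submonoid.powers a) M} (h : (a ^ n : A) • x = mk m 1) :
    x = divZPow a n m := by
  rw [divZPow_apply, ← h, ← algebraMap_smul (Localization.Away a) (a ^ n), smul_smul,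
    ← awayUnit_zpow_natCast, ← Units.val_mul, ← zpow_add, neg_add_cancel, zpow_zero,
    Units.val_one, one_smul]

theorem divZPow_add_smul (a : A) (i j : ℤ) (c : A) (m : M) :
    divZPow a (i + j) (c • m) =
      (((awayUnit a ^ (-i) : (Localization.Away a)ˣ) : Localization.Away a) *
        algebraMap A _ c) • divZPow a j m := by
  rw [divZPow_apply, divZPow_apply, mul_smul, algebraMap_smul, smul_comm c, smul'_mk, smul_smul,
    ← Units.val_mul, ← zpow_add, neg_add]

end LocalizedPowers

section Grading

open HomogeneousLocalization

variable {A : Type*} [CommRing A] {𝒜 : ℤ → Submodule ℤ A} [GradedAlgebra 𝒜] {a : A}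

theorem pow_mem_graded_natCast (ha : a ∈ 𝒜 1) (n : ℕ) : a ^ n ∈ 𝒜 n := by
  simpa using SetLike.pow_mem_graded n ha

/-- `c / aⁱ` for `c ∈ 𝒜 i`, written as `c * a ^ max(-i, 0) / a ^ max(i, 0)` so that numerator and
denominator have the same degree. -/
noncomputable def awayDivZPow (ha : a ∈ 𝒜 1) {i : ℤ} {c : A} (hc : c ∈ 𝒜 i) : Away 𝒜 a :=
  Away.mk 𝒜 ha i.toNat (c * a ^ (-i).toNat) <| by
    convert SetLike.mul_mem_graded hc (pow_mem_graded_natCast ha (-i).toNat) using 2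
    rw [nsmul_one]
    omega

theorem val_awayDivZPow (ha : a ∈ 𝒜 1) {i : ℤ} {c : A} (hc : c ∈ 𝒜 i) :
    (awayDivZPow ha hc).val =
      ((awayUnit a ^ (-i) : (Localization.Away a)ˣ) : Localization.Away a) * algebraMap A _ c := by
  rw [awayDivZPow, Away.val_mk, mk_pow_eq_awayUnit_zpow_mul, map_mul, ← awayUnit_zpow_natCast,
    mul_comm (algebraMap A _ c), ← mul_assoc, ← Units.val_mul, ← zpow_add]
  congr 3
  omega

theorem awayDivZPow_eq_away_mk (ha : a ∈ 𝒜 1) {n : ℕ} {c : A} (hc : c ∈ 𝒜 (n • 1)) :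
    awayDivZPow ha hc = Away.mk 𝒜 ha n c hc := by
  apply val_injective
  rw [val_awayDivZPow, Away.val_mk, mk_pow_eq_awayUnit_zpow_mul, nsmul_one]

theorem awayDivZPow_pow_eq_one (ha : a ∈ 𝒜 1) (n : ℕ) :
    awayDivZPow ha (SetLike.pow_mem_graded n ha) = 1 := by
  apply val_injective
  rw [awayDivZPow_eq_away_mk, Away.val_mk, val_one]
  exact Localization.mk_self ⟨a ^ n, _⟩

end Grading

section LocalizedTensor

variable {A : Type*} [CommRing A] (S : Submonoid A)
  (M N : Type*) [AddCommGroup M] [Module A M] [AddCommGroup N] [Module A N]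

noncomputable def localizedTensorEquiv :
    LocalizedModule S M ⊗[A] LocalizedModule S N ≃ₗ[A] LocalizedModule S (M ⊗[A] N) :=
  IsLocalizedModule.linearEquiv S (TensorProduct.map (mkLinearMap S M) (mkLinearMap S N))
    (mkLinearMap S (M ⊗[A] N))

variable {S M N}

theorem localizedTensorEquiv_mk_tmul_mk (m : M) (n : N) :
    localizedTensorEquiv S M N (mk m 1 ⊗ₜ mk n 1) = mk (m ⊗ₜ n) 1 :=
  IsLocalizedModule.linearEquiv_apply S _ _ (m ⊗ₜ n)

theorem localizedTensorEquiv_smul_tmul (r : Localization S) (x : LocalizedModule S M)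
    (y : LocalizedModule S N) :
    localizedTensorEquiv S M N ((r • x) ⊗ₜ y) = r • localizedTensorEquiv S M N (x ⊗ₜ y) := by
  rw [← smul_tmul']
  exact LinearMap.map_smul_of_tower (localizedTensorEquiv S M N).toLinearMap r (x ⊗ₜ y)

theorem localizedTensorEquiv_tmul_smul (r : Localization S) (x : LocalizedModule S M)
    (y : LocalizedModule S N) :
    localizedTensorEquiv S M N (x ⊗ₜ (r • y)) = r • localizedTensorEquiv S M N (x ⊗ₜ y) := by
  rw [← smul_tmul, localizedTensorEquiv_smul_tmul]

theorem localizedTensorEquiv_divZPow_tmul_divZPow (a : A) (i j : ℤ) (m : M) (n : N) :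
    localizedTensorEquiv _ M N (divZPow a i m ⊗ₜ divZPow a j n) = divZPow a (i + j) (m ⊗ₜ n) := by
  rw [divZPow_apply, divZPow_apply, divZPow_apply, localizedTensorEquiv_smul_tmul,
    localizedTensorEquiv_tmul_smul, localizedTensorEquiv_mk_tmul_mk, smul_smul, ← Units.val_mul,
    ← zpow_add, neg_add]

end LocalizedTensor

namespace modDegZero

open HomogeneousLocalization

variable {A : Type*} [CommRing A] {𝒜 : ℤ → Submodule ℤ A} [GradedAlgebra 𝒜] {a : A}

noncomputable abbrev awayModule (𝒜 : ℤ → Submodule ℤ A) [GradedAlgebra 𝒜] (a : A)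
    (M : Type*) [AddCommGroup M] [Module A M] :
    Module (Away 𝒜 a) (LocalizedModule (Submonoid.powers a) M) :=
  Module.compHom _ (algebraMap (Away 𝒜 a) (Localization.Away a))

attribute [local instance] awayModule

variable {M : Type*} [AddCommGroup M] [Module A M] {ℳ : ℤ → AddSubgroup M}

theorem away_smul_def (b : Away 𝒜 a) (x : LocalizedModule (Submonoid.powers a) M) :
    b • x = b.val • x :=
  rfl

theorem divZPow_natCast_mem {n : ℕ} {m : M} (hm : m ∈ ℳ n) :
    divZPow a n m ∈ modDegZero 𝒜 a M ℳ :=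
  Submodule.subset_span ⟨n, m, hm, pow_smul_divZPow a n m⟩

theorem divZPow_mem (ha : a ∈ 𝒜 1) (hℳ : ∀ (i j : ℤ), ∀ c ∈ 𝒜 i, ∀ m ∈ ℳ j, c • m ∈ ℳ (i + j))
    {i : ℤ} {m : M} (hm : m ∈ ℳ i) : divZPow a i m ∈ modDegZero 𝒜 a M ℳ := by
  obtain ⟨n, rfl | rfl⟩ := Int.eq_nat_or_neg i
  · exact divZPow_natCast_mem hm
  · have h0 : (a ^ n : A) • m ∈ ℳ ((0 : ℕ) : ℤ) := by
      simpa using hℳ n (-n) _ (pow_mem_graded_natCast ha n) m hm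
    convert divZPow_natCast_mem h0 using 1
    rw [divZPow_apply, divZPow_apply, neg_neg, awayUnit_zpow_natCast, algebraMap_smul,
      Nat.cast_zero, neg_zero, zpow_zero, Units.val_one, one_smul, smul'_mk]

theorem ext {P : Type*} [AddCommMonoid P] [Module (Away 𝒜 a) P]
    {f g : modDegZero 𝒜 a M ℳ →ₗ[Away 𝒜 a] P}
    (h : ∀ (n : ℕ) (m : M) (hm : m ∈ ℳ n), f ⟨divZPow a n m, divZPow_natCast_mem hm⟩ =
      g ⟨divZPow a n m, divZPow_natCast_mem hm⟩) : f = g := by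
  refine LinearMap.ext_on Submodule.span_span_coe_preimage ?_
  rintro ⟨x, hx⟩ hgen
  obtain ⟨n, m, hm, hxm⟩ := hgen
  obtain rfl := eq_divZPow_of_pow_smul_eq hxm
  exact h n m hm

section Normalization

variable [DirectSum.Decomposition ℳ] (ha : a ∈ 𝒜 1)
  (hℳ : ∀ (i j : ℤ), ∀ c ∈ 𝒜 i, ∀ m ∈ ℳ j, c • m ∈ ℳ (i + j))

noncomputable def normalize : M →+ modDegZero 𝒜 a M ℳ :=
  (DirectSum.toAddMonoid fun i => show ℳ i →+ modDegZero 𝒜 a M ℳ from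
    { toFun m := ⟨divZPow a i m, divZPow_mem ha hℳ m.2⟩
      map_zero' := Subtype.ext (map_zero (divZPow a i))
      map_add' m m' := Subtype.ext (map_add (divZPow a i) (m : M) m') }).comp
    (DirectSum.decomposeAddEquiv ℳ).toAddMonoidHom

theorem normalize_of_mem {i : ℤ} {m : M} (hm : m ∈ ℳ i) :
    (normalize ha hℳ m : LocalizedModule (Submonoid.powers a) M) = divZPow a i m := by
  simp [normalize, DirectSum.decompose_of_mem ℳ hm]

theorem normalize_smul_of_mem {i : ℤ} {c : A} (hc : c ∈ 𝒜 i) (m : M) :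
    normalize ha hℳ (c • m) = awayDivZPow ha hc • normalize ha hℳ m := by
  induction m using DirectSum.Decomposition.inductionOn ℳ with
  | zero => rw [smul_zero, map_zero, smul_zero]
  | add m m' hm hm' => rw [smul_add, map_add, map_add, smul_add, hm, hm']
  | homogeneous m =>
    obtain ⟨m, hm⟩ := m
    apply Subtype.ext
    rw [Submodule.coe_smul, normalize_of_mem ha hℳ (hℳ _ _ c hc m hm), normalize_of_mem ha hℳ hm,
      away_smul_def, val_awayDivZPow, divZPow_add_smul]

end Normalization

section Tensor

variable {N : Type*} [AddCommGroup N] [Module A N] {𝒩 : ℤ → AddSubgroup N}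

variable (𝒜 a M N) in
noncomputable def awayTensorMap :
    LocalizedModule (Submonoid.powers a) M →ₗ[Away 𝒜 a]
      LocalizedModule (Submonoid.powers a) N →ₗ[Away 𝒜 a]
        LocalizedModule (Submonoid.powers a) (M ⊗[A] N) :=
  LinearMap.mk₂ _ (fun x y => localizedTensorEquiv _ M N (x ⊗ₜ y))
    (fun x x' y => by rw [add_tmul, map_add])
    (fun b x y => localizedTensorEquiv_smul_tmul b.val x y)
    (fun x y y' => by rw [tmul_add, map_add])
    (fun b x y => localizedTensorEquiv_tmul_smul b.val x y)

theorem awayTensorMap_apply (x : LocalizedModule (Submonoid.powers a) M)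
    (y : LocalizedModule (Submonoid.powers a) N) :
    awayTensorMap 𝒜 a M N x y = localizedTensorEquiv _ M N (x ⊗ₜ y) :=
  rfl

theorem awayTensorMap_mem {x : LocalizedModule (Submonoid.powers a) M}
    {y : LocalizedModule (Submonoid.powers a) N}
    (hx : x ∈ modDegZero 𝒜 a M ℳ) (hy : y ∈ modDegZero 𝒜 a N 𝒩) :
    awayTensorMap 𝒜 a M N x y ∈ modDegZero 𝒜 a (M ⊗[A] N) (tensorGrade ℳ 𝒩) := by
  refine (show Submodule.map₂ _ _ _ ≤ _ from ?_) (Submodule.apply_mem_map₂ _ hx hy)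
  unfold modDegZero
  rw [Submodule.map₂_span_span, Submodule.span_le]
  rintro _ ⟨x, ⟨n, m, hm, hx⟩, y, ⟨k, m', hm', hy⟩, rfl⟩
  dsimp only
  rw [eq_divZPow_of_pow_smul_eq hx, eq_divZPow_of_pow_smul_eq hy, awayTensorMap_apply,
    localizedTensorEquiv_divZPow_tmul_divZPow, ← Nat.cast_add]
  exact divZPow_natCast_mem
    (AddSubgroup.subset_closure ⟨n, k, m, m', (Nat.cast_add n k).symm, hm, hm', rfl⟩)

variable (ℳ 𝒩) in
noncomputable def tensorMap :
    modDegZero 𝒜 a M ℳ ⊗[Away 𝒜 a] modDegZero 𝒜 a N 𝒩 →ₗ[Away 𝒜 a]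
      modDegZero 𝒜 a (M ⊗[A] N) (tensorGrade ℳ 𝒩) :=
  TensorProduct.lift <|
    LinearMap.codRestrict₂ ((awayTensorMap 𝒜 a M N).domRestrict₁₂ _ _) (Submodule.subtype _)
      Subtype.val_injective fun x y => ⟨⟨_, awayTensorMap_mem x.2 y.2⟩, rfl⟩

theorem coe_tensorMap_tmul (x : modDegZero 𝒜 a M ℳ) (y : modDegZero 𝒜 a N 𝒩) :
    (tensorMap ℳ 𝒩 (x ⊗ₜ y) : LocalizedModule (Submonoid.powers a) (M ⊗[A] N)) =
      localizedTensorEquiv _ M N (x.1 ⊗ₜ y.1) := by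
  rw [tensorMap, lift.tmul]
  exact LinearMap.codRestrict₂_apply ((awayTensorMap 𝒜 a M N).domRestrict₁₂ _ _)
    (Submodule.subtype (modDegZero 𝒜 a (M ⊗[A] N) (tensorGrade ℳ 𝒩))) _ _ x y

end Tensor

section Inverse

variable {N : Type*} [AddCommGroup N] [Module A N] {𝒩 : ℤ → AddSubgroup N}
  [DirectSum.Decomposition ℳ] [DirectSum.Decomposition 𝒩] (ha : a ∈ 𝒜 1)
  (hℳ : ∀ (i j : ℤ), ∀ c ∈ 𝒜 i, ∀ m ∈ ℳ j, c • m ∈ ℳ (i + j))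
  (h𝒩 : ∀ (i j : ℤ), ∀ c ∈ 𝒜 i, ∀ x ∈ 𝒩 j, c • x ∈ 𝒩 (i + j))

theorem normalize_smul_tmul (c : A) (m : M) (n : N) :
    normalize ha hℳ (c • m) ⊗ₜ[Away 𝒜 a] normalize ha h𝒩 n =
      normalize ha hℳ m ⊗ₜ normalize ha h𝒩 (c • n) := by
  induction c using DirectSum.Decomposition.inductionOn 𝒜 with
  | zero => rw [zero_smul, zero_smul, map_zero, map_zero, zero_tmul, tmul_zero]
  | add c c' hc hc' => rw [add_smul, add_smul, map_add, map_add, add_tmul, tmul_add, hc, hc']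
  | homogeneous c =>
    rw [normalize_smul_of_mem ha hℳ c.2, normalize_smul_of_mem ha h𝒩 c.2, smul_tmul]

noncomputable def normalizeTensor :
    M ⊗[A] N →+ modDegZero 𝒜 a M ℳ ⊗[Away 𝒜 a] modDegZero 𝒜 a N 𝒩 :=
  liftAddHom (((LinearMap.toAddMonoidHom'.comp (TensorProduct.mk _ _ _).toAddMonoidHom).compl₂
    (normalize ha h𝒩)).comp (normalize ha hℳ)) (normalize_smul_tmul ha hℳ h𝒩)

theorem normalizeTensor_tmul (m : M) (n : N) :
    normalizeTensor ha hℳ h𝒩 (m ⊗ₜ n) = normalize ha hℳ m ⊗ₜ normalize ha h𝒩 n :=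
  rfl

theorem normalizeTensor_smul_of_mem {i : ℤ} {c : A} (hc : c ∈ 𝒜 i) (t : M ⊗[A] N) :
    normalizeTensor ha hℳ h𝒩 (c • t) = awayDivZPow ha hc • normalizeTensor ha hℳ h𝒩 t := by
  induction t using TensorProduct.induction_on with
  | zero => rw [smul_zero, map_zero, smul_zero]
  | tmul m n =>
    rw [smul_tmul', normalizeTensor_tmul, normalizeTensor_tmul, normalize_smul_of_mem ha hℳ hc,
      smul_tmul']
  | add t t' ht ht' => rw [smul_add, map_add, map_add, smul_add, ht, ht']

theorem normalizeTensor_smul_of_mem_powers {s : A} (hs : s ∈ Submonoid.powers a) (t : M ⊗[A] N) :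
    normalizeTensor ha hℳ h𝒩 (s • t) = normalizeTensor ha hℳ h𝒩 t := by
  obtain ⟨n, rfl⟩ := hs
  rw [normalizeTensor_smul_of_mem ha hℳ h𝒩 (SetLike.pow_mem_graded n ha), awayDivZPow_pow_eq_one,
    one_smul]

noncomputable def tensorInv :
    LocalizedModule (Submonoid.powers a) (M ⊗[A] N) →ₗ[Away 𝒜 a]
      modDegZero 𝒜 a M ℳ ⊗[Away 𝒜 a] modDegZero 𝒜 a N 𝒩 where
  toFun z := z.liftOn (fun p => normalizeTensor ha hℳ h𝒩 p.1) <| by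
    rintro ⟨t, s⟩ ⟨t', s'⟩ ⟨u, hu⟩
    have := congrArg (normalizeTensor ha hℳ h𝒩) hu
    simpa only [Submonoid.smul_def, normalizeTensor_smul_of_mem_powers ha hℳ h𝒩 u.2,
      normalizeTensor_smul_of_mem_powers ha hℳ h𝒩 s.2,
      normalizeTensor_smul_of_mem_powers ha hℳ h𝒩 s'.2] using this
  map_add' z z' := by
    induction z, z' using LocalizedModule.induction_on₂ with
    | _ t t' s s' =>
      simp only [mk_add_mk, liftOn_mk, map_add, Submonoid.smul_def,
        normalizeTensor_smul_of_mem_powers ha hℳ h𝒩 s.2,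
        normalizeTensor_smul_of_mem_powers ha hℳ h𝒩 s'.2]
  map_smul' b z := by
    obtain ⟨n, c, hc, rfl⟩ := Away.mk_surjective 𝒜 ha b
    induction z using LocalizedModule.induction_on with
    | _ t s =>
      rw [away_smul_def, Away.val_mk, mk_smul_mk, liftOn_mk, liftOn_mk,
        normalizeTensor_smul_of_mem ha hℳ h𝒩 hc, awayDivZPow_eq_away_mk, RingHom.id_apply]

theorem tensorInv_mk (t : M ⊗[A] N) (s : Submonoid.powers a) :
    tensorInv ha hℳ h𝒩 (mk t s) = normalizeTensor ha hℳ h𝒩 t :=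
  rfl

theorem tensorInv_divZPow (n : ℕ) (t : M ⊗[A] N) :
    tensorInv ha hℳ h𝒩 (divZPow a n t) = normalizeTensor ha hℳ h𝒩 t := by
  rw [divZPow_natCast_eq_mk, tensorInv_mk]

theorem coe_tensorMap_normalizeTensor {i : ℤ} {t : M ⊗[A] N} (ht : t ∈ tensorGrade ℳ 𝒩 i) :
    (tensorMap ℳ 𝒩 (normalizeTensor ha hℳ h𝒩 t) :
      LocalizedModule (Submonoid.powers a) (M ⊗[A] N)) = divZPow a i t := by
  induction ht using AddSubgroup.closure_induction with
  | mem t ht =>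
    obtain ⟨i, j, m, n, rfl, hm, hn, rfl⟩ := ht
    rw [normalizeTensor_tmul, coe_tensorMap_tmul, normalize_of_mem ha hℳ hm,
      normalize_of_mem ha h𝒩 hn, localizedTensorEquiv_divZPow_tmul_divZPow]
  | zero => rw [map_zero, map_zero, map_zero, Submodule.coe_zero]
  | add t t' _ _ ht ht' => rw [map_add, map_add, map_add, Submodule.coe_add, ht, ht']
  | neg t _ ht => rw [map_neg, map_neg, map_neg, Submodule.coe_neg, ht]

theorem tensorMap_comp_tensorInv :
    tensorMap ℳ 𝒩 ∘ₗ (tensorInv ha hℳ h𝒩).domRestrict _ = LinearMap.id :=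
  ext fun n t ht => Subtype.ext <| by
    rw [LinearMap.comp_apply, LinearMap.domRestrict_apply, tensorInv_divZPow,
      coe_tensorMap_normalizeTensor ha hℳ h𝒩 ht, LinearMap.id_apply]

theorem tensorInv_comp_tensorMap :
    (tensorInv ha hℳ h𝒩).domRestrict _ ∘ₗ tensorMap ℳ 𝒩 = LinearMap.id := by
  refine TensorProduct.ext (ext fun n m hm => ext fun k m' hm' => ?_)
  simp only [LinearMap.compr₂ₛₗ_apply, mk_apply, LinearMap.comp_apply,
    LinearMap.domRestrict_apply, LinearMap.id_apply]
  rw [coe_tensorMap_tmul, localizedTensorEquiv_divZPow_tmul_divZPow, ← Nat.cast_add,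
    tensorInv_divZPow, normalizeTensor_tmul]
  congr 1 <;> exact Subtype.ext (normalize_of_mem ha _ ‹_›)

noncomputable def tensorEquiv :
    modDegZero 𝒜 a M ℳ ⊗[Away 𝒜 a] modDegZero 𝒜 a N 𝒩 ≃ₗ[Away 𝒜 a]
      modDegZero 𝒜 a (M ⊗[A] N) (tensorGrade ℳ 𝒩) :=
  .ofLinearMap _ _ (tensorMap_comp_tensorInv ha hℳ h𝒩) (tensorInv_comp_tensorMap ha hℳ h𝒩)

end Inverse

end modDegZero

theorem stmt2_general {A : Type*} [CommRing A] (𝒜 : ℤ → Submodule ℤ A) [GradedAlgebra 𝒜]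
    {M N : Type*} [AddCommGroup M] [Module A M] [AddCommGroup N] [Module A N]
    (ℳ : ℤ → AddSubgroup M) (𝒩 : ℤ → AddSubgroup N)
    [DirectSum.Decomposition ℳ] [DirectSum.Decomposition 𝒩]
    (hℳ : ∀ (i j : ℤ), ∀ c ∈ 𝒜 i, ∀ m ∈ ℳ j, c • m ∈ ℳ (i + j))
    (h𝒩 : ∀ (i j : ℤ), ∀ c ∈ 𝒜 i, ∀ x ∈ 𝒩 j, c • x ∈ 𝒩 (i + j))
    (a : A) (ha : a ∈ 𝒜 1) :
    letI := Module.compHom (LocalizedModule (Submonoid.powers a) M)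
      (algebraMap (HomogeneousLocalization.Away 𝒜 a) (Localization (Submonoid.powers a)))
    letI := Module.compHom (LocalizedModule (Submonoid.powers a) N)
      (algebraMap (HomogeneousLocalization.Away 𝒜 a) (Localization (Submonoid.powers a)))
    letI := Module.compHom (LocalizedModule (Submonoid.powers a) (TensorProduct A M N))
      (algebraMap (HomogeneousLocalization.Away 𝒜 a) (Localization (Submonoid.powers a)))
    Nonempty
      ((TensorProduct (HomogeneousLocalization.Away 𝒜 a)
          (modDegZero 𝒜 a M ℳ) (modDegZero 𝒜 a N 𝒩)) ≃ₗ[HomogeneousLocalization.Away 𝒜 a]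
        (modDegZero 𝒜 a (TensorProduct A M N) (tensorGrade ℳ 𝒩))) :=
  ⟨modDegZero.tensorEquiv ha hℳ h𝒩⟩

/-- for an ℕ-graded commutative ring `A`, ℤ-graded `A`-modules `M`, `N` and a
degree-one element `a ∈ A₁`, there is an isomorphism
`M[a⁻¹]₀ ⊗_{A[a⁻¹]₀} N[a⁻¹]₀ ≅ ((M ⊗_A N)[a⁻¹])₀` of `A[a⁻¹]₀`-modules. -/
theorem stmt2 {A : Type*} [CommRing A] (𝒜 : ℤ → Submodule ℤ A) [GradedAlgebra 𝒜]
    (hA : ∀ n : ℤ, n < 0 → 𝒜 n = ⊥)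
    {M N : Type*} [AddCommGroup M] [Module A M] [AddCommGroup N] [Module A N]
    (ℳ : ℤ → AddSubgroup M) (𝒩 : ℤ → AddSubgroup N)
    [DirectSum.Decomposition ℳ] [DirectSum.Decomposition 𝒩]
    (hℳ : ∀ (i j : ℤ), ∀ c ∈ 𝒜 i, ∀ m ∈ ℳ j, c • m ∈ ℳ (i + j))
    (h𝒩 : ∀ (i j : ℤ), ∀ c ∈ 𝒜 i, ∀ x ∈ 𝒩 j, c • x ∈ 𝒩 (i + j))
    (a : A) (ha : a ∈ 𝒜 1) :
    letI := Module.compHom (LocalizedModule (Submonoid.powers a) M)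
      (algebraMap (HomogeneousLocalization.Away 𝒜 a) (Localization (Submonoid.powers a)))
    letI := Module.compHom (LocalizedModule (Submonoid.powers a) N)
      (algebraMap (HomogeneousLocalization.Away 𝒜 a) (Localization (Submonoid.powers a)))
    letI := Module.compHom (LocalizedModule (Submonoid.powers a) (TensorProduct A M N))
      (algebraMap (HomogeneousLocalization.Away 𝒜 a) (Localization (Submonoid.powers a)))
    Nonempty
      ((TensorProduct (HomogeneousLocalization.Away 𝒜 a)
          (modDegZero 𝒜 a M ℳ) (modDegZero 𝒜 a N 𝒩)) ≃ₗ[HomogeneousLocalization.Away 𝒜 a]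
        (modDegZero 𝒜 a (TensorProduct A M N) (tensorGrade ℳ 𝒩))) :=
  stmt2_general 𝒜 ℳ 𝒩 hℳ h𝒩 a ha
end

section
/- Let A be an ℕ-graded commutative Noetherian ring generated over A_0 by elements of degree 1, and let M be a finitely generated ℤ-graded A-module. Then the sheaf-theoretic vanishing criterion holds purely algebraically: M[a⁻¹]_0 = 0 for every homogeneous a of degree 1 if and only if there exists N such that M_n = 0 for all n ≥ N. -/
variable {A : Type*} [CommRing A]

/-!
If `M[a⁻¹]₀ = 0`, every homogeneous `m` is killed by a power of `a` (shift `m` to a degree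
`n ≥ 0` and look at `m / aⁿ`), so `M[a⁻¹] = 0` and, `M` being finite, `a ∈ √(Ann M)`. With `I`
the ideal generated by `A₁` and `A` Noetherian, this gives `Iᴷ ⊆ Ann M`. As `A` is generated by
`A₀` and `A₁`, the degree-`k` component of any element lies in `Iᵏ`; so if `M` is spanned by
homogeneous elements of degree `≤ D`, then `Mₙ ⊆ Iⁿ⁻ᴰ M`, which is zero for `n ≥ D + K`.
Conversely, if `M` vanishes in large degrees, every homogeneous element is killed by a power of
any `a ∈ A₁`, so `M[a⁻¹] = 0`.
-/

theorem Module.mem_radical_annihilator_of_subsingleton_away {R M : Type*} [CommRing R]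
    [AddCommGroup M] [Module R M] [Module.Finite R M] {a : R}
    (h : Subsingleton (LocalizedModule.Away a M)) : a ∈ (Module.annihilator R M).radical := by
  rwa [LocalizedModule.subsingleton_iff_support_subset, Module.support_eq_zeroLocus,
    ← PrimeSpectrum.zeroLocus_span {a}, PrimeSpectrum.zeroLocus_subset_zeroLocus_iff,
    Ideal.span_le, Set.singleton_subset_iff] at h

open DirectSum

section GradedRing

variable (𝒜 : ℤ → Submodule ℤ A) [GradedAlgebra 𝒜]

theorem coe_decompose_mem_pow_of_mem {J : Ideal A} {x : A} {j : ℤ} (hx : x ∈ 𝒜 j)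
    (hxJ : x ∈ J ^ j.toNat) (i : ℤ) : (decompose 𝒜 x i : A) ∈ J ^ i.toNat := by
  by_cases hi : i = j
  · rwa [hi, decompose_of_mem_same 𝒜 hx]
  · rw [decompose_of_mem_ne 𝒜 hx (Ne.symm hi)]
    exact zero_mem _

theorem coe_decompose_mul_mem_pow {J : Ideal A} {x y : A}
    (hx : ∀ i, (decompose 𝒜 x i : A) ∈ J ^ i.toNat)
    (hy : ∀ i, (decompose 𝒜 y i : A) ∈ J ^ i.toNat) (i : ℤ) :
    (decompose 𝒜 (x * y) i : A) ∈ J ^ i.toNat := by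
  classical
  rw [decompose_mul, coe_mul_apply]
  refine Submodule.sum_mem _ fun pq hpq => ?_
  have hle : i.toNat ≤ pq.1.toNat + pq.2.toNat := by
    simp only [Finset.mem_filter] at hpq
    omega
  exact Ideal.pow_le_pow_right hle (pow_add J _ _ ▸ Ideal.mul_mem_mul (hx pq.1) (hy pq.2))

theorem coe_decompose_mem_span_pow
    (hgen : Subring.closure ((𝒜 0 : Set A) ∪ (𝒜 1 : Set A)) = ⊤) (x : A) (i : ℤ) :
    (decompose 𝒜 x i : A) ∈ Ideal.span (𝒜 1 : Set A) ^ i.toNat := by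
  have hx : x ∈ Subring.closure ((𝒜 0 : Set A) ∪ (𝒜 1 : Set A)) := hgen ▸ Subring.mem_top x
  induction hx using Subring.closure_induction generalizing i with
  | mem y hy =>
    rcases hy with hy | hy
    · exact coe_decompose_mem_pow_of_mem 𝒜 hy (by simp) i
    · exact coe_decompose_mem_pow_of_mem 𝒜 hy (by simpa using Ideal.subset_span hy) i
  | zero => simp
  | one => exact coe_decompose_mem_pow_of_mem 𝒜 (SetLike.one_mem_graded 𝒜) (by simp) i
  | add y z _ _ hy hz => simpa using add_mem (hy i) (hz i)
  | neg y _ hy =>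
    rw [decompose_neg]
    exact neg_mem (hy i)
  | mul y z _ _ hy hz => exact coe_decompose_mul_mem_pow 𝒜 hy hz i

end GradedRing

section GradedModule

variable (𝒜 : ℤ → Submodule ℤ A) [GradedAlgebra 𝒜]
  {M : Type*} [AddCommGroup M] [Module A M] (ℳ : ℤ → AddSubgroup M)

theorem mk_mem_modDegZero {a : A} {n : ℕ} {m : M} (hm : m ∈ ℳ n) :
    LocalizedModule.mk m ⟨a ^ n, pow_mem (Submonoid.mem_powers a) n⟩ ∈ modDegZero 𝒜 a M ℳ := by
  let := Module.compHom (LocalizedModule (Submonoid.powers a) M)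
    (algebraMap (HomogeneousLocalization.Away 𝒜 a) (Localization (Submonoid.powers a)))
  refine Submodule.subset_span ⟨n, m, hm, ?_⟩
  rw [LocalizedModule.smul'_mk]
  exact LocalizedModule.mk_cancel ⟨a ^ n, pow_mem (Submonoid.mem_powers a) n⟩ m

variable [Decomposition ℳ]

theorem LocalizedModule.subsingleton_of_homogeneous (S : Submonoid A)
    (h : ∀ j, ∀ m ∈ ℳ j, ∃ r ∈ S, r • m = 0) : Subsingleton (LocalizedModule S M) := by
  rw [LocalizedModule.subsingleton_iff_ker_eq_top, eq_top_iff]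
  rintro m -
  induction m using Decomposition.inductionOn ℳ with
  | zero => exact zero_mem _
  | @homogeneous j m => exact LocalizedModule.mem_ker_mkLinearMap_iff.mpr (h j m m.2)
  | add m m' hm hm' => exact add_mem hm hm'

theorem modDegZero_eq_bot_iff_subsingleton {a : A} (ha : a ∈ 𝒜 1)
    (hℳ : ∀ (i j : ℤ), ∀ c ∈ 𝒜 i, ∀ m ∈ ℳ j, c • m ∈ ℳ (i + j)) :
    modDegZero 𝒜 a M ℳ = ⊥ ↔ Subsingleton (LocalizedModule (Submonoid.powers a) M) := by
  let := Module.compHom (LocalizedModule (Submonoid.powers a) M)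
    (algebraMap (HomogeneousLocalization.Away 𝒜 a) (Localization (Submonoid.powers a)))
  refine ⟨fun h => LocalizedModule.subsingleton_of_homogeneous ℳ _ fun j m hm => ?_,
    fun _ => Submodule.eq_bot_of_subsingleton⟩
  obtain ⟨n, hn⟩ := Int.eq_ofNat_of_zero_le (by omega : 0 ≤ (j.natAbs : ℤ) + j)
  have hshift : a ^ j.natAbs • m ∈ ℳ n :=
    hn ▸ hℳ _ j _ (by simpa using SetLike.pow_mem_graded j.natAbs ha) m hm
  have hzero := (Submodule.mem_bot _).mp (h ▸ mk_mem_modDegZero 𝒜 ℳ hshift)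
  rw [IsLocalizedModule.mk_eq_mk', IsLocalizedModule.mk'_eq_zero'] at hzero
  obtain ⟨⟨r, hr⟩, hrm⟩ := hzero
  exact ⟨r * a ^ j.natAbs, mul_mem hr (pow_mem (Submonoid.mem_powers a) _), by rwa [mul_smul]⟩

theorem coe_decompose_smul_of_mem (hℳ : ∀ (i j : ℤ), ∀ c ∈ 𝒜 i, ∀ m ∈ ℳ j, c • m ∈ ℳ (i + j))
    (r : A) {m : M} {d : ℤ} (hm : m ∈ ℳ d) (n : ℤ) :
    (decompose ℳ (r • m) n : M) = (decompose 𝒜 r (n - d) : A) • m := by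
  induction r using Decomposition.inductionOn 𝒜 with
  | zero => simp
  | @homogeneous i r =>
    have hrm := hℳ i d r r.2 m hm
    by_cases hi : i = n - d
    · subst hi
      rw [decompose_of_mem_same 𝒜 r.2, decompose_of_mem_same ℳ (by simpa using hrm)]
    · rw [decompose_of_mem_ne 𝒜 r.2 hi, decompose_of_mem_ne ℳ hrm (by omega), zero_smul]
  | add r r' hr hr' => simp [add_smul, hr, hr']

theorem exists_span_iUnion_le_eq_top [Module.Finite A M] :
    ∃ D : ℤ, Submodule.span A (⋃ d ≤ D, (ℳ d : Set M)) = ⊤ := by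
  classical
  obtain ⟨s, hs⟩ := Module.Finite.fg_top (R := A) (M := M)
  obtain ⟨D, hD⟩ := (s.biUnion fun g => (decompose ℳ g).support).exists_le
  refine ⟨D, eq_top_iff.mpr (hs ▸ Submodule.span_le.mpr fun g hg => ?_)⟩
  rw [← sum_support_decompose ℳ g]
  refine Submodule.sum_mem _ fun d hd => Submodule.subset_span ?_
  exact Set.mem_biUnion (hD d (Finset.mem_biUnion.mpr ⟨g, hg, hd⟩)) (SetLike.coe_mem _)

theorem mem_span_pow_smul_top_of_mem
    (hgen : Subring.closure ((𝒜 0 : Set A) ∪ (𝒜 1 : Set A)) = ⊤)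
    (hℳ : ∀ (i j : ℤ), ∀ c ∈ 𝒜 i, ∀ m ∈ ℳ j, c • m ∈ ℳ (i + j))
    {D : ℤ} (hD : Submodule.span A (⋃ d ≤ D, (ℳ d : Set M)) = ⊤) {n : ℤ} {m : M}
    (hm : m ∈ ℳ n) :
    m ∈ Ideal.span (𝒜 1 : Set A) ^ (n - D).toNat • (⊤ : Submodule A M) := by
  obtain ⟨c, t, ht, -, rfl⟩ := Submodule.mem_span_iff_exists_finset_subset.mp
    (hD ▸ Submodule.mem_top : m ∈ Submodule.span A (⋃ d ≤ D, (ℳ d : Set M)))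
  rw [← decompose_of_mem_same ℳ hm, decompose_sum, DFinsupp.finsetSum_apply,
    AddSubmonoidClass.coe_finsetSum]
  refine Submodule.sum_mem _ fun g hg => ?_
  obtain ⟨d, hdD, hgd⟩ := Set.mem_iUnion₂.mp (ht hg)
  rw [coe_decompose_smul_of_mem 𝒜 ℳ hℳ _ hgd]
  exact Submodule.smul_mem_smul (Ideal.pow_le_pow_right (Int.toNat_le_toNat (by omega))
    (coe_decompose_mem_span_pow 𝒜 hgen _ _)) Submodule.mem_top

end GradedModule

theorem stmt4_general (𝒜 : ℤ → Submodule ℤ A) [GradedAlgebra 𝒜]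
    (hNoeth : IsNoetherianRing A)
    (hgen : Subring.closure ((𝒜 0 : Set A) ∪ (𝒜 1 : Set A)) = ⊤)
    {M : Type*} [AddCommGroup M] [Module A M] [Module.Finite A M]
    (ℳ : ℤ → AddSubgroup M) [DirectSum.Decomposition ℳ]
    (hℳ : ∀ (i j : ℤ), ∀ c ∈ 𝒜 i, ∀ m ∈ ℳ j, c • m ∈ ℳ (i + j)) :
    (∀ a ∈ 𝒜 1, modDegZero 𝒜 a M ℳ = ⊥) ↔ (∃ N : ℤ, ∀ n ≥ N, ℳ n = ⊥) := by
  constructor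
  · intro hvanish
    obtain ⟨D, hD⟩ := exists_span_iUnion_le_eq_top (A := A) ℳ
    have hrad : Ideal.span (𝒜 1 : Set A) ≤ (Module.annihilator A M).radical :=
      Ideal.span_le.mpr fun a ha => Module.mem_radical_annihilator_of_subsingleton_away
        ((modDegZero_eq_bot_iff_subsingleton 𝒜 ℳ ha hℳ).mp (hvanish a ha))
    obtain ⟨K, hK⟩ := Ideal.exists_pow_le_of_le_radical_of_fg hrad (hNoeth.noetherian _)
    refine ⟨D + K, fun n hn => (AddSubgroup.eq_bot_iff_forall _).mpr fun m hm => ?_⟩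
    have hmK : m ∈ Module.annihilator A M • (⊤ : Submodule A M) :=
      Submodule.smul_mono_left ((Ideal.pow_le_pow_right (by omega)).trans hK)
        (mem_span_pow_smul_top_of_mem 𝒜 ℳ hgen hℳ hD hm)
    rwa [← Submodule.annihilator_top, Submodule.annihilator_smul] at hmK
  · rintro ⟨N, hN⟩ a ha
    refine (modDegZero_eq_bot_iff_subsingleton 𝒜 ℳ ha hℳ).mpr
      (LocalizedModule.subsingleton_of_homogeneous ℳ _ fun j m hm => ?_)
    refine ⟨a ^ (N - j).toNat, pow_mem (Submonoid.mem_powers a) _, ?_⟩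
    have hshift := hℳ _ j _ (by simpa using SetLike.pow_mem_graded (N - j).toNat ha) m hm
    rwa [hN _ (by omega), AddSubgroup.mem_bot] at hshift

/-- for an ℕ-graded commutative Noetherian ring `A` generated over `A₀` by
degree-one elements and a finitely generated ℤ-graded `A`-module `M`, one has `M[a⁻¹]₀ = 0`
for every homogeneous `a` of degree 1 if and only if `M` vanishes in all sufficiently
large degrees. -/
theorem stmt4 (𝒜 : ℤ → Submodule ℤ A) [GradedAlgebra 𝒜]
    (hA : ∀ n : ℤ, n < 0 → 𝒜 n = ⊥)
    (hNoeth : IsNoetherianRing A)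
    (hgen : Subring.closure ((𝒜 0 : Set A) ∪ (𝒜 1 : Set A)) = ⊤)
    {M : Type*} [AddCommGroup M] [Module A M] [Module.Finite A M]
    (ℳ : ℤ → AddSubgroup M) [DirectSum.Decomposition ℳ]
    (hℳ : ∀ (i j : ℤ), ∀ c ∈ 𝒜 i, ∀ m ∈ ℳ j, c • m ∈ ℳ (i + j)) :
    (∀ a ∈ 𝒜 1, modDegZero 𝒜 a M ℳ = ⊥) ↔ (∃ N : ℤ, ∀ n ≥ N, ℳ n = ⊥) :=
  stmt4_general 𝒜 hNoeth hgen ℳ hℳ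
end

section
/- Let A be an ℕ-graded commutative ring and a ∈ A_1. For any integer ℓ, the degree-0 part of the localized shifted module A(ℓ)[a⁻¹] is a free A[a⁻¹]_0-module of rank 1, with the isomorphism A[a⁻¹]_0 → A(ℓ)[a⁻¹]_0 given by multiplication by a^ℓ. -/
/-- The degree-zero component of the localization of the shifted graded module `A(ℓ)` at powers
of `a` (with `a` of degree 1): spanned by fractions `x / aⁿ` with `x ∈ A(ℓ)_n = A_{n+ℓ}`. -/
def shiftLocDegZero {A : Type*} [CommRing A] (𝒜 : ℤ → Submodule ℤ A) (a : A) (ℓ : ℤ) :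
    Submodule ℤ (Localization.Away a) :=
  Submodule.span ℤ {y | ∃ (n : ℕ) (x : A), x ∈ 𝒜 ((n : ℤ) + ℓ) ∧
    y * algebraMap A (Localization.Away a) (a ^ n) = algebraMap A (Localization.Away a) x}

/-- for an ℕ-graded commutative ring `A` and `a ∈ A₁`, the degree-zero part of the
localized shifted module `A(ℓ)[a⁻¹]` is a free `A[a⁻¹]₀`-module of rank 1, the isomorphism
`A[a⁻¹]₀ → A(ℓ)[a⁻¹]₀` being multiplication by `a^ℓ` (the `ℓ`-th power of the unit `a`). -/
theorem stmt9 {A : Type*} [CommRing A] (𝒜 : ℤ → Submodule ℤ A) [GradedAlgebra 𝒜]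
    (hA : ∀ n : ℤ, n < 0 → 𝒜 n = ⊥) (a : A) (ha : a ∈ 𝒜 1) (ℓ : ℤ)
    (u : (Localization.Away a)ˣ) (hu : (u : Localization.Away a) = algebraMap A _ a) :
    Function.Injective (fun z : HomogeneousLocalization.Away 𝒜 a =>
      z.val * ((u ^ ℓ : (Localization.Away a)ˣ) : Localization.Away a)) ∧
    Set.range (fun z : HomogeneousLocalization.Away 𝒜 a =>
      z.val * ((u ^ ℓ : (Localization.Away a)ˣ) : Localization.Away a))
      = (shiftLocDegZero 𝒜 a ℓ : Set (Localization.Away a)) := by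
  have hupow : ∀ n : ℕ, algebraMap A (Localization.Away a) (a ^ n)
      = ((u ^ (n : ℤ) : (Localization.Away a)ˣ) : Localization.Away a) := by
    intro n
    rw [map_pow, ← hu, zpow_natCast, Units.val_pow_eq_pow_val]
  have hcancel : ∀ (v : (Localization.Away a)ˣ) (p q : Localization.Away a),
      p * v = q * v → p = q := by
    intro v p q h
    have := congrArg (· * ((v⁻¹ : (Localization.Away a)ˣ) : Localization.Away a)) h
    simpa [mul_assoc, ← Units.val_mul] using this
  constructor
  · intro z1 z2 h
    exact HomogeneousLocalization.val_injective _ (hcancel _ _ _ h)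
  · -- the additive map
    set f : HomogeneousLocalization.Away 𝒜 a →+ Localization.Away a :=
      { toFun := fun z => z.val * ((u ^ ℓ : (Localization.Away a)ˣ) : Localization.Away a)
        map_zero' := by simp
        map_add' := fun z1 z2 => by simp [HomogeneousLocalization.val_add, add_mul] } with hf
    have hrange : Set.range (fun z : HomogeneousLocalization.Away 𝒜 a =>
        z.val * ((u ^ ℓ : (Localization.Away a)ˣ) : Localization.Away a))
        = (LinearMap.range f.toIntLinearMap : Set (Localization.Away a)) := rfl
    rw [hrange]
    apply Set.Subset.antisymm
    · rintro _ ⟨z, rfl⟩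
      apply Submodule.subset_span
      obtain ⟨m, hm⟩ := z.den_mem
      by_cases hzero : a ^ m = 0
      · have : (0 : A) ∈ Submonoid.powers a := ⟨m, hzero⟩
        have : Subsingleton (Localization.Away a) :=
          IsLocalization.subsingleton (M := Submonoid.powers a) this
        exact ⟨0, 0, by simp, Subsingleton.elim _ _⟩
      · have ham : a ^ m ∈ 𝒜 (m : ℤ) := by
          simpa using SetLike.pow_mem_graded m ha
        have hdeg : z.deg = (m : ℤ) :=
          DirectSum.degree_eq_of_mem_mem 𝒜 z.den_mem_deg (hm ▸ ham) (hm ▸ hzero)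
        obtain ⟨j, k, hjk⟩ : ∃ j k : ℕ, (j : ℤ) = ℓ + k := ⟨ℓ.toNat, (-ℓ).toNat, by omega⟩
        refine ⟨m + k, z.num * a ^ j, ?_, ?_⟩
        · have h1 : z.num * a ^ j ∈ 𝒜 (z.deg + j) := by
            have := SetLike.mul_mem_graded z.num_mem_deg
              (show a ^ j ∈ 𝒜 (j : ℤ) by simpa using SetLike.pow_mem_graded j ha)
            exact this
          have : (((m + k : ℕ) : ℤ) + ℓ) = z.deg + j := by rw [hdeg]; omega
          rw [this]
          exact h1
        · have hden : z.val * ((u ^ (m : ℤ) : (Localization.Away a)ˣ) : Localization.Away a)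
              = algebraMap A (Localization.Away a) z.num := by
            have hm' : a ^ m = z.den := hm
            rw [← hupow, hm', mul_comm, ← Algebra.smul_def, HomogeneousLocalization.den_smul_val]
          rw [hupow, map_mul, hupow]
          calc z.val * ((u ^ ℓ : (Localization.Away a)ˣ) : Localization.Away a)
                * ((u ^ ((m + k : ℕ) : ℤ) : (Localization.Away a)ˣ) : Localization.Away a)
              = z.val * ((u ^ (m : ℤ) : (Localization.Away a)ˣ) : Localization.Away a)
                * ((u ^ (j : ℤ) : (Localization.Away a)ˣ) : Localization.Away a) := by
                have he : ℓ + ((m + k : ℕ) : ℤ) = (m : ℤ) + j := by push_cast; omega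
                rw [mul_assoc, mul_assoc, ← Units.val_mul, ← Units.val_mul, ← zpow_add,
                  ← zpow_add, he]
            _ = algebraMap A (Localization.Away a) z.num
                * ((u ^ (j : ℤ) : (Localization.Away a)ˣ) : Localization.Away a) := by rw [hden]
    · suffices h : shiftLocDegZero 𝒜 a ℓ ≤ LinearMap.range f.toIntLinearMap by
        exact fun y hy => h hy
      refine Submodule.span_le.mpr ?_
      rintro y ⟨n, x, hx, heq⟩
      rw [hupow] at heq
      by_cases hneg : ((n : ℤ) + ℓ) < 0
      · have hx0 : x = 0 := by
          rw [hA _ hneg] at hx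
          simpa using hx
        have hy0 : y = 0 := by
          apply hcancel (u ^ (n : ℤ)) y 0
          rw [heq, hx0, map_zero, zero_mul]
        exact ⟨0, by simp [hf, hy0]⟩
      · push_neg at hneg
        set p := ((n : ℤ) + ℓ).toNat with hp
        have hap : a ^ p ∈ 𝒜 ((n : ℤ) + ℓ) := by
          have := SetLike.pow_mem_graded p ha
          simpa [show (p : ℤ) = (n : ℤ) + ℓ by omega] using this
        set z : HomogeneousLocalization.Away 𝒜 a :=
          HomogeneousLocalization.mk ⟨(n : ℤ) + ℓ, ⟨x, hx⟩, ⟨a ^ p, hap⟩, ⟨p, rfl⟩⟩ with hz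
        have hzval : z.val * ((u ^ (p : ℤ) : (Localization.Away a)ˣ) : Localization.Away a)
            = algebraMap A (Localization.Away a) x := by
          rw [hz, HomogeneousLocalization.val_mk, ← hupow, Localization.mk_eq_mk']
          exact IsLocalization.mk'_spec _ _ _
        refine ⟨z, ?_⟩
        show z.val * ((u ^ ℓ : (Localization.Away a)ˣ) : Localization.Away a) = y
        apply hcancel (u ^ (n : ℤ))
        have hpn : ℓ + (n : ℤ) = (p : ℤ) := by omega
        rw [mul_assoc, ← Units.val_mul, ← zpow_add, hpn, hzval, heq]
end

section
/- Let A be an ℕ-graded commutative Noetherian ring. Then the Veronese subring A^{(d)} = ⨁_{n≥0} A_{dn} is Noetherian for every d > 0, and if M is a finitely generated ℤ-graded A-module then ⨁_{n≥0} M_{dn} is a finitely generated A^{(d)}-module. -/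
/-!
Write `π` for the projection of a graded module onto its components of degree in `dℕ`.
Because `A` lives in non-negative degrees, `π (a • m) = π a • m` whenever `m` already lies in
`M^{(d)} = ⨁ₙ M_{dn}`, and `π a ∈ A^{(d)}`. Hence `π` maps the `A`-submodule generated by an
`A^{(d)}`-submodule `N ⊆ M^{(d)}` back into `N`, so `N ↦ A • N` is an order embedding and the
ascending chain condition descends from `M` to `M^{(d)}`; the case `M = A` is the ring statement.
-/

/-- The `d`-th Veronese subring `A^{(d)} = ⨁_{n≥0} A_{dn}` of a ℤ-graded commutative ring. -/
def veronese {A : Type*} [CommRing A] (𝒜 : ℤ → Submodule ℤ A) (d : ℤ) : Subring A :=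
  Subring.closure (⋃ n : ℕ, (𝒜 ((n : ℤ) * d) : Set A))

section

open Submodule

theorem isNoetherian_of_retraction {V A L M : Type*} [Semiring V] [Semiring A]
    [AddCommMonoid L] [Module V L] [AddCommMonoid M] [Module A M] [IsNoetherian A M]
    (ι : L → M) (π : M →+ L) (ρ : A → V) (hπι : ∀ l, π (ι l) = l)
    (hπ : ∀ a l, π (a • ι l) = ρ a • l) : IsNoetherian V L := by
  have hspan : ∀ N : Submodule V L, ∀ x ∈ span A (ι '' N), ∀ a : A, π (a • x) ∈ N := by
    intro N x hx
    induction hx using Submodule.span_induction with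
    | mem x hx =>
      obtain ⟨l, hl, rfl⟩ := hx
      exact fun a => hπ a l ▸ N.smul_mem _ hl
    | zero => simp
    | add x y _ _ hx hy => exact fun a => by rw [smul_add, map_add]; exact add_mem (hx a) (hy a)
    | smul b x _ hx => exact fun a => by rw [smul_smul]; exact hx _
  let e : Submodule V L ↪o Submodule A M :=
    OrderEmbedding.ofMapLEIff (fun N => span A (ι '' N)) fun N N' =>
      ⟨fun h l hl => by
        simpa [hπι] using hspan N' _ (h (subset_span ⟨l, hl, rfl⟩)) 1,
      fun h => span_mono (Set.image_mono h)⟩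
  exact isNoetherian_mk e.wellFoundedGT

end

namespace Submodule

theorem mem_span_int_of_mem_span_subring {A M : Type*} [Ring A] [AddCommGroup M] [Module A M]
    {S : Subring A} {T : Finset M} {m : M} (hm : m ∈ span S (T : Set M)) :
    m ∈ span ℤ {y | ∃ v ∈ S, ∃ x ∈ T, y = v • x} := by
  obtain ⟨f, -, rfl⟩ := mem_span_finset.1 hm
  exact sum_mem fun x hx => subset_span ⟨f x, (f x).2, x, hx, rfl⟩

end Submodule

namespace DirectSum

open Submodule

variable {ι M σ : Type*} [DecidableEq ι] [AddCommGroup M] [SetLike σ M] [AddSubgroupClass σ M]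
  {ℳ : ι → σ} [Decomposition ℳ] {s : Set ι} [DecidablePred (· ∈ s)]

variable (ℳ s) in
def projFilter : M →+ M :=
  (decomposeAddEquiv ℳ).symm.toAddMonoidHom.comp
    ((DFinsupp.filterAddMonoidHom _ (· ∈ s)).comp (decomposeAddEquiv ℳ).toAddMonoidHom)

theorem projFilter_of_mem {i : ι} {x : M} (hx : x ∈ ℳ i) (hi : i ∈ s) : projFilter ℳ s x = x := by
  change (decompose ℳ).symm (DFinsupp.filter _ (decompose ℳ x)) = x
  rw [decompose_of_mem ℳ hx, of, DFinsupp.singleAddHom_apply,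
    DFinsupp.filter_single_pos _ _ hi, ← DFinsupp.singleAddHom_apply, ← of, decompose_symm_of]

theorem projFilter_of_mem_of_notMem {i : ι} {x : M} (hx : x ∈ ℳ i) (hi : i ∉ s) :
    projFilter ℳ s x = 0 := by
  change (decompose ℳ).symm (DFinsupp.filter _ (decompose ℳ x)) = 0
  rw [decompose_of_mem ℳ hx, of, DFinsupp.singleAddHom_apply, DFinsupp.filter_single_neg _ _ hi,
    decompose_symm_zero]

theorem projFilter_mem_span (x : M) : projFilter ℳ s x ∈ span ℤ (⋃ i ∈ s, (ℳ i : Set M)) := by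
  induction x using Decomposition.inductionOn ℳ with
  | zero => simp
  | @homogeneous i x =>
    by_cases hi : i ∈ s
    · rw [projFilter_of_mem x.2 hi]
      exact subset_span (Set.mem_biUnion hi x.2)
    · rw [projFilter_of_mem_of_notMem x.2 hi]
      exact zero_mem _
  | add x y hx hy => rw [map_add]; exact add_mem hx hy

theorem projFilter_eq_self {x : M} (hx : x ∈ span ℤ (⋃ i ∈ s, (ℳ i : Set M))) :
    projFilter ℳ s x = x := by
  induction hx using Submodule.span_induction with
  | mem x hx =>
    obtain ⟨i, hi, hx⟩ := Set.mem_iUnion₂.mp hx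
    exact projFilter_of_mem hx hi
  | zero => simp
  | add x y _ _ hx hy => rw [map_add, hx, hy]
  | smul n x _ hx => rw [map_zsmul, hx]

end DirectSum

section Multiples

open AddSubmonoid

theorem Int.mem_multiples_iff_dvd_and_nonneg {d i : ℤ} (hd : 0 < d) :
    i ∈ multiples d ↔ d ∣ i ∧ 0 ≤ i := by
  refine ⟨?_, fun ⟨⟨k, hk⟩, hi⟩ => ⟨k.toNat, ?_⟩⟩
  · rintro ⟨n, rfl⟩
    simp only [nsmul_eq_mul]
    exact ⟨dvd_mul_left _ _, by positivity⟩
  · have : 0 ≤ k := by nlinarith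
    simp [hk, Int.toNat_of_nonneg this, mul_comm]

theorem Int.add_mem_multiples_iff {d i j : ℤ} (hd : 0 < d) (hi : 0 ≤ i) (hj : j ∈ multiples d) :
    i + j ∈ multiples d ↔ i ∈ multiples d := by
  rw [Int.mem_multiples_iff_dvd_and_nonneg hd] at hj ⊢
  rw [Int.mem_multiples_iff_dvd_and_nonneg hd, dvd_add_left hj.1]
  exact and_congr_right fun _ => ⟨fun _ => hi, fun _ => by linarith [hj.2]⟩

theorem iUnion_natCast_mul_eq_biUnion_multiples {M σ : Type*} [SetLike σ M] (ℳ : ℤ → σ) (d : ℤ) :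
    ⋃ n : ℕ, (ℳ (n * d) : Set M) = ⋃ i ∈ multiples d, (ℳ i : Set M) := by
  ext x
  simp [mem_multiples_iff]

end Multiples

section Veronese

open DirectSum Submodule AddSubmonoid Pointwise Classical

variable {A : Type*} [CommRing A] {𝒜 : ℤ → Submodule ℤ A} [GradedAlgebra 𝒜] {d : ℤ}

theorem coe_veronese : (veronese 𝒜 d : Set A) = span ℤ (⋃ i ∈ multiples d, (𝒜 i : Set A)) := by
  set U := ⋃ i ∈ multiples d, (𝒜 i : Set A)
  have hmul : U * U ⊆ U := Set.mul_subset_iff.2 fun x hx y hy => by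
    obtain ⟨i, hi, hx⟩ := Set.mem_iUnion₂.1 hx
    obtain ⟨j, hj, hy⟩ := Set.mem_iUnion₂.1 hy
    exact Set.mem_biUnion (add_mem hi hj) (SetLike.mul_mem_graded hx hy)
  have hone : (1 : A) ∈ span ℤ U :=
    subset_span (Set.mem_biUnion (zero_mem _) SetLike.GradedOne.one_mem)
  let S : Subring A := ((span ℤ U).toSubalgebra hone fun x y hx hy =>
    span_mono hmul (span_mul_span ℤ U U ▸ Submodule.mul_mem_mul hx hy)).toSubring
  rw [veronese, iUnion_natCast_mul_eq_biUnion_multiples]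
  refine subset_antisymm (Subring.closure_le (t := S) |>.2 subset_span) fun x hx => ?_
  induction hx using span_induction with
  | mem x hx => exact Subring.subset_closure hx
  | zero => exact zero_mem _
  | add x y _ _ hx hy => exact add_mem hx hy
  | smul n x _ hx => exact zsmul_mem hx n

theorem mem_veronese_iff {x : A} :
    x ∈ veronese 𝒜 d ↔ x ∈ span ℤ (⋃ i ∈ multiples d, (𝒜 i : Set A)) :=
  Set.ext_iff.1 coe_veronese x

theorem projFilter_multiples_smul (hA : ∀ n : ℤ, n < 0 → 𝒜 n = ⊥) (hd : 0 < d)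
    {M σ : Type*} [AddCommGroup M] [Module A M] [SetLike σ M] [AddSubgroupClass σ M]
    {ℳ : ℤ → σ} [Decomposition ℳ] [SetLike.GradedSMul 𝒜 ℳ] (a : A) {m : M}
    (hm : m ∈ span ℤ (⋃ i ∈ multiples d, (ℳ i : Set M))) :
    projFilter ℳ (multiples d) (a • m) = projFilter 𝒜 (multiples d) a • m := by
  induction hm using span_induction with
  | mem m hm =>
    obtain ⟨j, hj, hm⟩ := Set.mem_iUnion₂.1 hm
    induction a using Decomposition.inductionOn 𝒜 with
    | zero => simp
    | @homogeneous i a =>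
      obtain ⟨a, ha⟩ := a
      rcases lt_or_ge i 0 with hi | hi
      · obtain rfl : a = 0 := by simpa [hA i hi] using ha
        simp
      have ham : a • m ∈ ℳ (i + j) := SetLike.GradedSMul.smul_mem ha hm
      by_cases hi' : i ∈ multiples d
      · rw [projFilter_of_mem ha hi',
          projFilter_of_mem ham ((Int.add_mem_multiples_iff hd hi hj).2 hi')]
      · rw [projFilter_of_mem_of_notMem ha hi', zero_smul,
          projFilter_of_mem_of_notMem ham (mt (Int.add_mem_multiples_iff hd hi hj).1 hi')]
    | add a b ha hb => rw [add_smul, map_add, ha, hb, map_add, add_smul]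
  | zero => simp
  | add m m' _ _ hm hm' => rw [smul_add, map_add, hm, hm', smul_add]
  | smul n m _ hm => rw [smul_comm, map_zsmul, hm, smul_comm]

variable (𝒜 d) in
noncomputable def veroneseProj : A →+ veronese 𝒜 d :=
  (projFilter 𝒜 (multiples d)).codRestrict _ fun a => mem_veronese_iff.2 (projFilter_mem_span a)

theorem isNoetherianRing_veronese [IsNoetherianRing A] (hA : ∀ n : ℤ, n < 0 → 𝒜 n = ⊥)
    (hd : 0 < d) : IsNoetherianRing (veronese 𝒜 d) :=
  isNoetherian_of_retraction (A := A) (M := A) Subtype.val (veroneseProj 𝒜 d) (veroneseProj 𝒜 d)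
    (fun v => Subtype.ext (projFilter_eq_self (mem_veronese_iff.1 v.2)))
    (fun a v => Subtype.ext
      (projFilter_multiples_smul hA hd a (mem_veronese_iff.1 v.2)))

variable {M σ : Type*} [AddCommGroup M] [Module A M] [SetLike σ M] [AddSubgroupClass σ M]
  {ℳ : ℤ → σ} [Decomposition ℳ] [SetLike.GradedSMul 𝒜 ℳ]

theorem mem_span_veronese_iff (hA : ∀ n : ℤ, n < 0 → 𝒜 n = ⊥) (hd : 0 < d) {m : M} :
    m ∈ span (veronese 𝒜 d) (⋃ i ∈ multiples d, (ℳ i : Set M)) ↔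
      m ∈ span ℤ (⋃ i ∈ multiples d, (ℳ i : Set M)) := by
  refine ⟨fun hm => ?_, fun hm => span_le_restrictScalars ℤ _ _ hm⟩
  induction hm using span_induction with
  | mem m hm => exact subset_span hm
  | zero => exact zero_mem _
  | add m m' _ _ hm hm' => exact add_mem hm hm'
  | smul v m _ hm =>
    have hv : projFilter 𝒜 (multiples d) v = v :=
      projFilter_eq_self (mem_veronese_iff.1 v.2)
    rw [Subring.smul_def, ← hv, ← projFilter_multiples_smul hA hd _ hm]
    exact projFilter_mem_span _

theorem isNoetherian_span_veronese [IsNoetherianRing A] [Module.Finite A M]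
    (hA : ∀ n : ℤ, n < 0 → 𝒜 n = ⊥) (hd : 0 < d) :
    IsNoetherian (veronese 𝒜 d) (span (veronese 𝒜 d) (⋃ i ∈ multiples d, (ℳ i : Set M))) :=
  have := isNoetherian_of_isNoetherianRing_of_finite A M
  isNoetherian_of_retraction (A := A) (M := M) Subtype.val
    ((projFilter ℳ (multiples d)).codRestrict _ fun m =>
      (mem_span_veronese_iff hA hd).2 (projFilter_mem_span m))
    (veroneseProj 𝒜 d)
    (fun m => Subtype.ext (projFilter_eq_self ((mem_span_veronese_iff hA hd).1 m.2)))
    (fun a m => Subtype.ext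
      (projFilter_multiples_smul hA hd a ((mem_span_veronese_iff hA hd).1 m.2)))

end Veronese

/-- for an ℕ-graded commutative Noetherian ring `A`, the Veronese subring
`A^{(d)}` is Noetherian for every `d > 0`, and for every finitely generated ℤ-graded
`A`-module `M` the part `⨁_{n≥0} M_{dn}` is a finitely generated `A^{(d)}`-module. -/
theorem stmt15 {A : Type*} [CommRing A] (𝒜 : ℤ → Submodule ℤ A) [GradedAlgebra 𝒜]
    (hA : ∀ n : ℤ, n < 0 → 𝒜 n = ⊥)
    (hNoeth : IsNoetherianRing A) (d : ℤ) (hd : 0 < d)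
    {M : Type*} [AddCommGroup M] [Module A M]
    (ℳ : ℤ → AddSubgroup M) [DirectSum.Decomposition ℳ]
    (hℳ : ∀ (i j : ℤ), ∀ c ∈ 𝒜 i, ∀ m ∈ ℳ j, c • m ∈ ℳ (i + j)) :
    IsNoetherianRing (veronese 𝒜 d) ∧
    (Module.Finite A M →
      ∃ s : Finset M,
        (↑s ⊆ (Submodule.span ℤ (⋃ n : ℕ, (ℳ ((n : ℤ) * d) : Set M)) : Set M)) ∧
        ∀ m ∈ Submodule.span ℤ (⋃ n : ℕ, (ℳ ((n : ℤ) * d) : Set M)),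
          m ∈ Submodule.span ℤ {y : M | ∃ v ∈ veronese 𝒜 d, ∃ x ∈ s, y = v • x}) := by
  have : SetLike.GradedSMul 𝒜 ℳ := ⟨fun i j _ _ ha hm => hℳ i j _ ha _ hm⟩
  refine ⟨isNoetherianRing_veronese hA hd, fun _ => ?_⟩
  have := isNoetherian_span_veronese (ℳ := ℳ) hA hd
  obtain ⟨T, hT⟩ := Module.Finite.iff_fg (N := Submodule.span (veronese 𝒜 d)
    (⋃ i ∈ AddSubmonoid.multiples d, (ℳ i : Set M))) |>.1 inferInstance
  simp only [iUnion_natCast_mul_eq_biUnion_multiples]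
  exact ⟨T, fun x hx => (mem_span_veronese_iff hA hd).1 (hT ▸ Submodule.subset_span hx),
    fun m hm => Submodule.mem_span_int_of_mem_span_subring
      (hT ▸ (mem_span_veronese_iff hA hd).2 hm)⟩
end

section
/- Let A be an ℕ-graded commutative ring and a ∈ A_d a homogeneous element of degree d > 0. Then the canonical ring map ⨁_{n≥0} A_{dn} → A[a⁻¹]_0 sending x ∈ A_{dn} to x/aⁿ is surjective, and its kernel is the ideal generated by the elements {a·y − y : y ∈ ⨁_{n≥0} A_{dn}}; equivalently, A[a⁻¹]_0 is isomorphic to the quotient of the Veronese subring A^{(d)} by the ideal generated by a − 1 (where a − 1 is interpreted as the inhomogeneous element with a ∈ A_d and 1 ∈ A_0 in A^{(d)}). -/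
lemma mem_veronese_of_mem {A : Type*} [CommRing A] {𝒜 : ℤ → Submodule ℤ A} {d : ℤ}
    {x : A} (n : ℕ) (hx : x ∈ 𝒜 ((n : ℤ) * d)) : x ∈ veronese 𝒜 d :=
  Subring.subset_closure (Set.mem_iUnion.2 ⟨n, hx⟩)

/-- for an ℕ-graded commutative ring `A` and `a ∈ A_d` with `d > 0`, any ring map
`ψ : A^{(d)} → A[a⁻¹]₀` sending a homogeneous `x ∈ A_{dn}` to `x / aⁿ` is surjective with
kernel the ideal generated by the elements `a·z − z`; i.e. `A[a⁻¹]₀ ≅ A^{(d)} / (a − 1)`. -/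
theorem stmt16 {A : Type*} [CommRing A] (𝒜 : ℤ → Submodule ℤ A) [GradedAlgebra 𝒜]
    (hA : ∀ n : ℤ, n < 0 → 𝒜 n = ⊥)
    (a : A) (d : ℤ) (hd : 0 < d) (ha : a ∈ 𝒜 d) (haV : a ∈ veronese 𝒜 d)
    (ψ : (veronese 𝒜 d) →+* HomogeneousLocalization.Away 𝒜 a)
    (hψ : ∀ (n : ℕ) (x : A) (hx : x ∈ 𝒜 (n • d)) (hxV : x ∈ veronese 𝒜 d),
      ψ ⟨x, hxV⟩ = (HomogeneousLocalization.mk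
        ⟨n • d, ⟨x, hx⟩, ⟨a ^ n, SetLike.pow_mem_graded n ha⟩,
          (Submonoid.mem_powers_iff _ _).mpr ⟨n, rfl⟩⟩ :
        HomogeneousLocalization.Away 𝒜 a)) :
    Function.Surjective ψ ∧
      RingHom.ker ψ = Ideal.span
        {y : veronese 𝒜 d | ∃ z : veronese 𝒜 d, y = (⟨a, haV⟩ : veronese 𝒜 d) * z - z} := by
  classical
  set I : Ideal (veronese 𝒜 d) :=
    Ideal.span {y : veronese 𝒜 d | ∃ z : veronese 𝒜 d, y = (⟨a, haV⟩ : veronese 𝒜 d) * z - z}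
    with hI
  -- ψ sends a to 1
  have ha1 : a ∈ 𝒜 ((1 : ℕ) • d) := by simpa using ha
  have hψa : ψ ⟨a, haV⟩ = 1 := by
    rw [hψ 1 a ha1 haV]
    apply HomogeneousLocalization.val_injective
    rw [HomogeneousLocalization.val_mk, HomogeneousLocalization.val_one]
    simp only [pow_one]
    exact Localization.mk_self ⟨a, (Submonoid.mem_powers_iff a a).mpr ⟨1, pow_one a⟩⟩
  -- the span is contained in the kernel
  have hIker : I ≤ RingHom.ker ψ := by
    rw [hI, Ideal.span_le]
    rintro y ⟨z, rfl⟩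
    simp [RingHom.mem_ker, map_sub, map_mul, hψa]
  -- a^c * z ≡ z mod I
  have hpow : ∀ (c : ℕ) (z : veronese 𝒜 d), (⟨a, haV⟩ : veronese 𝒜 d) ^ c * z - z ∈ I := by
    intro c z
    induction c with
    | zero => simpa using I.zero_mem
    | succ n ih =>
      have h1 : (⟨a, haV⟩ : veronese 𝒜 d) * ((⟨a, haV⟩ : veronese 𝒜 d) ^ n * z) - (⟨a, haV⟩ : veronese 𝒜 d) ^ n * z ∈ I :=
        Ideal.subset_span ⟨_, rfl⟩
      have h2 := I.add_mem h1 ih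
      convert h2 using 1
      ring
  -- bump a homogeneous element to a higher degree mod I
  have bump : ∀ (N M : ℕ), N ≤ M → ∀ y : veronese 𝒜 d, (y : A) ∈ 𝒜 ((N : ℤ) * d) →
      ∃ y' : veronese 𝒜 d, (y' : A) ∈ 𝒜 ((M : ℤ) * d) ∧ y' - y ∈ I := by
    intro N M hNM y hy
    refine ⟨(⟨a, haV⟩ : veronese 𝒜 d) ^ (M - N) * y, ?_, hpow (M - N) y⟩
    have h1 : (a ^ (M - N) * (y : A)) ∈ 𝒜 ((M - N : ℕ) • d + (N : ℤ) * d) :=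
      SetLike.mul_mem_graded (SetLike.pow_mem_graded (M - N) ha) hy
    have e : ((M - N : ℕ) • d + (N : ℤ) * d) = (M : ℤ) * d := by
      rw [nsmul_eq_mul, Nat.cast_sub hNM]; ring
    rw [e] at h1
    simpa using h1
  -- every element of V is congruent mod I to a homogeneous element
  have key : ∀ x : veronese 𝒜 d, ∃ (N : ℕ) (y : veronese 𝒜 d), (y : A) ∈ 𝒜 ((N : ℤ) * d) ∧ x - y ∈ I := by
    rintro ⟨x, hx⟩
    induction hx using Subring.closure_induction with
    | mem w hw =>
      obtain ⟨n, hn⟩ := Set.mem_iUnion.1 hw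
      exact ⟨n, ⟨w, mem_veronese_of_mem n hn⟩, hn, by simpa using I.zero_mem⟩
    | zero =>
      refine ⟨0, 0, by simp, ?_⟩
      rw [show (⟨0, Subring.zero_mem _⟩ : veronese 𝒜 d) = 0 from rfl, sub_zero]
      exact I.zero_mem
    | one =>
      refine ⟨0, 1, by simpa using SetLike.GradedOne.one_mem (A := 𝒜), ?_⟩
      rw [show (⟨1, Subring.one_mem _⟩ : veronese 𝒜 d) = 1 from rfl, sub_self]
      exact I.zero_mem
    | add w w' hw hw' ih ih' =>
      obtain ⟨N, y, hy, hwy⟩ := ih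
      obtain ⟨N', y', hy', hwy'⟩ := ih'
      obtain ⟨z, hz, hzy⟩ := bump N (max N N') (le_max_left _ _) y hy
      obtain ⟨z', hz', hzy'⟩ := bump N' (max N N') (le_max_right _ _) y' hy'
      refine ⟨max N N', z + z', by simpa using (𝒜 _).add_mem hz hz', ?_⟩
      have h2 : ((⟨w, hw⟩ : veronese 𝒜 d) - y) + ((⟨w', hw'⟩ : veronese 𝒜 d) - y')
          - (z - y) - (z' - y') ∈ I :=
        I.sub_mem (I.sub_mem (I.add_mem hwy hwy') hzy) hzy'
      show ((⟨w, hw⟩ : veronese 𝒜 d) + ⟨w', hw'⟩) - (z + z') ∈ I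
      convert h2 using 1
      ring
    | neg w hw ih =>
      obtain ⟨N, y, hy, hwy⟩ := ih
      refine ⟨N, -y, by simpa using (𝒜 _).neg_mem hy, ?_⟩
      have h2 : -((⟨w, hw⟩ : veronese 𝒜 d) - y) ∈ I := I.neg_mem hwy
      show (-(⟨w, hw⟩ : veronese 𝒜 d)) - (-y) ∈ I
      convert h2 using 1
      ring
    | mul w w' hw hw' ih ih' =>
      obtain ⟨N, y, hy, hwy⟩ := ih
      obtain ⟨N', y', hy', hwy'⟩ := ih'
      refine ⟨N + N', y * y', ?_, ?_⟩
      · have h1 := SetLike.mul_mem_graded hy hy'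
        have e : ((N : ℤ) * d + (N' : ℤ) * d) = ((N + N' : ℕ) : ℤ) * d := by push_cast; ring
        rw [e] at h1
        simpa using h1
      · have h2 : (⟨w, hw⟩ : veronese 𝒜 d) * ((⟨w', hw'⟩ : veronese 𝒜 d) - y') + ((⟨w, hw⟩ : veronese 𝒜 d) - y) * y' ∈ I :=
        I.add_mem (I.mul_mem_left _ hwy') (I.mul_mem_right _ hwy)
        show ((⟨w, hw⟩ : veronese 𝒜 d) * ⟨w', hw'⟩) - y * y' ∈ I
        convert h2 using 1
        ring
  -- surjectivity
  have hsurj : Function.Surjective ψ := by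
    intro z
    obtain ⟨k, hk⟩ := z.den_mem
    by_cases h0 : a ^ k = 0
    · have : Subsingleton (HomogeneousLocalization.Away 𝒜 a) :=
        HomogeneousLocalization.subsingleton 𝒜 ⟨k, h0⟩
      exact ⟨0, Subsingleton.elim _ _⟩
    · have hden : z.den ∈ 𝒜 (k • d) := hk ▸ SetLike.pow_mem_graded k ha
      have hdeg : k • d = z.deg :=
        DirectSum.degree_eq_of_mem_mem 𝒜 hden z.den_mem_deg (hk ▸ h0)
      have hnum : z.num ∈ 𝒜 (k • d) := hdeg ▸ z.num_mem_deg
      have hnumV : z.num ∈ veronese 𝒜 d :=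
        mem_veronese_of_mem k (by simpa [nsmul_eq_mul] using hnum)
      refine ⟨⟨z.num, hnumV⟩, ?_⟩
      rw [hψ k z.num hnum hnumV]
      apply HomogeneousLocalization.val_injective
      rw [HomogeneousLocalization.val_mk, z.eq_num_div_den]
      congr 1
      exact Subtype.ext hk
  refine ⟨hsurj, le_antisymm ?_ hIker⟩
  -- kernel ⊆ span
  intro x hx
  rw [RingHom.mem_ker] at hx
  obtain ⟨N, y, hy, hxy⟩ := key x
  have hψy : ψ y = 0 := by
    have h1 : ψ (x - y) = 0 := hIker hxy
    rw [map_sub, hx, zero_sub, neg_eq_zero] at h1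
    exact h1
  obtain ⟨yv, hyV⟩ := y
  have hy' : yv ∈ 𝒜 ((N : ℕ) • d) := by simpa [nsmul_eq_mul] using hy
  rw [hψ N yv hy' hyV] at hψy
  have hval := congrArg HomogeneousLocalization.val hψy
  rw [HomogeneousLocalization.val_mk, HomogeneousLocalization.val_zero,
    Localization.mk_eq_mk'] at hval
  rw [IsLocalization.mk'_eq_zero_iff] at hval
  obtain ⟨m, hm⟩ := hval
  obtain ⟨c, hc⟩ := m.2
  have hc' : a ^ c * yv = 0 := by rw [← hc] at hm; simpa using hm
  have h3 : (⟨a, haV⟩ : veronese 𝒜 d) ^ c * ⟨yv, hyV⟩ = 0 := by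
    apply Subtype.ext
    push_cast
    exact hc'
  have h5 : (x - ⟨yv, hyV⟩) - ((⟨a, haV⟩ : veronese 𝒜 d) ^ c * ⟨yv, hyV⟩ - ⟨yv, hyV⟩)
      + (⟨a, haV⟩ : veronese 𝒜 d) ^ c * ⟨yv, hyV⟩ ∈ I :=
    I.add_mem (I.sub_mem hxy (hpow c ⟨yv, hyV⟩)) (by rw [h3]; exact I.zero_mem)
  have h4 : x = (x - ⟨yv, hyV⟩) - ((⟨a, haV⟩ : veronese 𝒜 d) ^ c * ⟨yv, hyV⟩ - ⟨yv, hyV⟩)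
      + (⟨a, haV⟩ : veronese 𝒜 d) ^ c * ⟨yv, hyV⟩ := by ring
  rw [h4]
  exact h5
end

section
/- Let A be an ℕ-graded commutative ring and S the multiplicative set of powers of a homogeneous element a of degree d > 0. Then localization commutes with taking homogeneous components in the following sense: for every n ∈ ℤ, the degree-n component of A[a⁻¹] is the filtered colimit of the system A_{n} → A_{n+d} → A_{n+2d} → ⋯ where each map is multiplication by a. -/
/-- The degree-`n` component of the graded localization `A[a⁻¹]` for `a` homogeneous of degree
`d`: spanned by the fractions `x / aᵏ` with `x` homogeneous of degree `n + k·d`. -/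
def locDegD {A : Type*} [CommRing A] (𝒜 : ℤ → Submodule ℤ A) (a : A) (d : ℤ) (n : ℤ) :
    Submodule ℤ (Localization.Away a) :=
  Submodule.span ℤ {y | ∃ (k : ℕ) (x : A), x ∈ 𝒜 (n + (k : ℤ) * d) ∧
    y * algebraMap A (Localization.Away a) (a ^ k) = algebraMap A (Localization.Away a) x}

/-- for an ℕ-graded commutative ring `A` and `a ∈ A_d`, `d > 0`, the degree-`n`
component of `A[a⁻¹]` is the filtered colimit of `A_n → A_{n+d} → A_{n+2d} → ⋯` along
multiplication by `a`: every degree-`n` element is of the form `x / aᵏ` with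
`x ∈ A_{n+kd}`, and `x / aᵏ = z / aˡ` holds iff the two elements agree after multiplying by a
power of `a`. -/
theorem stmt18 {A : Type*} [CommRing A] (𝒜 : ℤ → Submodule ℤ A) [GradedAlgebra 𝒜]
    (hA : ∀ m : ℤ, m < 0 → 𝒜 m = ⊥)
    (a : A) (d : ℤ) (hd : 0 < d) (ha : a ∈ 𝒜 d) (n : ℤ) :
    (∀ y ∈ locDegD 𝒜 a d n, ∃ (k : ℕ) (x : A), x ∈ 𝒜 (n + (k : ℤ) * d) ∧
      y * algebraMap A (Localization.Away a) (a ^ k)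
        = algebraMap A (Localization.Away a) x) ∧
    (∀ (k l : ℕ) (x z : A), x ∈ 𝒜 (n + (k : ℤ) * d) → z ∈ 𝒜 (n + (l : ℤ) * d) →
      (algebraMap A (Localization.Away a) (x * a ^ l)
          = algebraMap A (Localization.Away a) (z * a ^ k)
        ↔ ∃ m : ℕ, a ^ m * (x * a ^ l) = a ^ m * (z * a ^ k))) := by
  constructor
  · -- the generating set is itself a submodule
    let P : Submodule ℤ (Localization.Away a) :=
      { carrier := {y | ∃ (k : ℕ) (x : A), x ∈ 𝒜 (n + (k : ℤ) * d) ∧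
          y * algebraMap A (Localization.Away a) (a ^ k)
            = algebraMap A (Localization.Away a) x}
        zero_mem' := ⟨0, 0, by simp⟩
        add_mem' := by
          rintro y₁ y₂ ⟨k₁, x₁, hx₁, h₁⟩ ⟨k₂, x₂, hx₂, h₂⟩
          refine ⟨k₁ + k₂, x₁ * a ^ k₂ + x₂ * a ^ k₁, ?_, ?_⟩
          · apply add_mem
            · have := SetLike.mul_mem_graded hx₁ (SetLike.pow_mem_graded k₂ ha)
              convert this using 2; push_cast; ring
            · have := SetLike.mul_mem_graded hx₂ (SetLike.pow_mem_graded k₁ ha)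
              convert this using 2; push_cast; ring
          · simp only [pow_add, map_mul, map_add]
            rw [← h₁, ← h₂]; ring
        smul_mem' := by
          rintro c y ⟨k, x, hx, h⟩
          exact ⟨k, c • x, Submodule.smul_mem _ c hx, by
            rw [smul_mul_assoc, h, map_zsmul]⟩ }
    intro y hy
    exact Submodule.span_le.mpr (fun z hz => (hz : z ∈ P)) hy
  · intro k l x z _ _
    rw [IsLocalization.eq_iff_exists (Submonoid.powers a) (Localization.Away a)]
    constructor
    · rintro ⟨⟨c, m, rfl⟩, hc⟩
      exact ⟨m, hc⟩
    · rintro ⟨m, hm⟩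
      exact ⟨⟨a ^ m, m, rfl⟩, hm⟩
end

section
/- Let A be an ℕ-graded commutative ring, and let f, g ∈ π be homogeneous elements of degree 1 (f, g ∈ A_1). Then the image of g/f in the ring A[f⁻¹]_0 becomes invertible after applying the canonical map A[f⁻¹]_0 → A[(fg)⁻¹]_0, and the induced map (A[f⁻¹]_0)[(g/f)⁻¹] → A[(fg)⁻¹]_0 from the universal property of localization of (ungraded) commutative rings is an isomorphism; moreover this isomorphism identifies D₊(fg) ⊆ Proj A with the basic open subset D(g/f) of Spec A[f⁻¹]_0. -/
/-!
For `f, g` of degree one, `g / f` is the element `t = g ^ deg f / f ^ deg g` for which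
`A[(fg)⁻¹]₀ = A[f⁻¹]₀[t⁻¹]` (`HomogeneousLocalization.Away.isLocalization_mul`), so
the algebraic claims are the universal property of that localization. On `D₊(f)` the element `f` is
invertible, hence `D₊(fg) ∩ D₊(f) = D₊(g) ∩ D₊(f)`, which is the preimage of `D(g/f)`.
-/

open AlgebraicGeometry HomogeneousLocalization

section

variable {A σ : Type*} [CommRing A] [SetLike σ A]

lemma HomogeneousLocalization.Away.isLocalizationElem_eq_mk [AddSubgroupClass σ A]
    {𝒜 : ℕ → σ} [GradedRing 𝒜] {f g : A} (hf : f ∈ 𝒜 1) (hg : g ∈ 𝒜 1) :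
    Away.isLocalizationElem hf hg = mk ⟨1, ⟨g, hg⟩, ⟨f, hf⟩, Submonoid.mem_powers f⟩ := by
  ext
  simp

lemma ProjectiveSpectrum.val_preimage_basicOpen_mul [AddSubmonoidClass σ A]
    {𝒜 : ℕ → σ} [GradedRing 𝒜] (f g : A) :
    (Subtype.val ⁻¹' (basicOpen 𝒜 (f * g) : Set (ProjectiveSpectrum 𝒜)) : Set (basicOpen 𝒜 f)) =
      Subtype.val ⁻¹' (basicOpen 𝒜 g : Set (ProjectiveSpectrum 𝒜)) := by
  ext x
  simp [basicOpen_mul, (mem_basicOpen 𝒜 f x.1).mp x.2]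

end

/-- for an ℕ-graded commutative ring `A` and `f, g ∈ A₁`, the image of `g/f` under
the canonical map `A[f⁻¹]₀ → A[(fg)⁻¹]₀` is invertible, the induced map
`(A[f⁻¹]₀)[(g/f)⁻¹] → A[(fg)⁻¹]₀` from the universal property of localization is an
isomorphism, and under the standard homeomorphism `D₊(f) ≅ Spec A[f⁻¹]₀` the open subset
`D₊(fg)` corresponds to the basic open subset `D(g/f)`. -/
theorem stmt19 {A : Type*} [CommRing A] (𝒜 : ℕ → Submodule ℤ A) [GradedAlgebra 𝒜]
    (f g : A) (hf : f ∈ 𝒜 1) (hg : g ∈ 𝒜 1)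
    (t : HomogeneousLocalization.Away 𝒜 f)
    (ht : t = HomogeneousLocalization.mk ⟨1, ⟨g, hg⟩, ⟨f, hf⟩, Submonoid.mem_powers f⟩) :
    IsUnit (HomogeneousLocalization.awayMap 𝒜 hg (rfl : f * g = f * g) t) ∧
    (∀ h : IsUnit (HomogeneousLocalization.awayMap 𝒜 hg (rfl : f * g = f * g) t),
      Function.Bijective
        (Localization.awayLift (HomogeneousLocalization.awayMap 𝒜 hg (rfl : f * g = f * g)) t h)) ∧
    (ProjIsoSpecTopComponent.toSpec 𝒜 f ⁻¹'
        (PrimeSpectrum.basicOpen t : Set (PrimeSpectrum (HomogeneousLocalization.Away 𝒜 f)))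
      = Subtype.val ⁻¹' (ProjectiveSpectrum.basicOpen 𝒜 (f * g) : Set (ProjectiveSpectrum 𝒜))) := by
  let := (awayMap 𝒜 hg (rfl : f * g = f * g)).toAlgebra
  have : IsLocalization.Away t (Away 𝒜 (f * g)) := by
    rw [ht, ← Away.isLocalizationElem_eq_mk]
    exact Away.isLocalization_mul hf hg rfl one_ne_zero
  refine ⟨IsLocalization.Away.algebraMap_isUnit t, fun h ↦ ?_, ?_⟩
  · exact IsLocalization.bijective (Submonoid.powers t) _ (IsLocalization.Away.lift_comp t h)
  · rw [ht, ProjIsoSpecTopComponent.toSpec_preimage_basicOpen]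
    exact (ProjectiveSpectrum.val_preimage_basicOpen_mul f g).symm
end
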